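/- (Proposition 1, singular value soft-thresholding) Let A be a real p×q matrix with singular value decomposition A = U Σ Vᵀ, where U and V are orthogonal matrices of sizes p×p and q×q and Σ is the p×q rectangular diagonal matrix with nonnegative diagonal entries a₁,…,a_{min(p,q)} (the singular values of A). Let λ > 0, and let Σ_λ be the p×q rectangular diagonal matrix with diagonal entries (a_k − λ)₊ = max(a_k − λ, 0). Then B* = U Σ_λ Vᵀ is a global minimizer over B ∈ ℝ^{p×q} of the function B ↦ (1/2)‖B − A‖_F² + λ‖B‖_*; in particular B* has the same singular vectors as A and singular values (a_k − λ)₊. -/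

import Mathlib

open Matrix
/-!
(Proposition 1, singular value soft-thresholding.)
If `A = U Σ Vᵀ` with `U, V` orthogonal and `Σ` rectangular diagonal with
nonnegative diagonal entries `a k`, then `B* = U Σ_λ Vᵀ`, where `Σ_λ` has
diagonal entries `(a k − λ)₊`, is a global minimizer of
`B ↦ (1/2)‖B − A‖_F² + λ‖B‖_*`.
-/

/-- The singular values of a real `p × q` matrix: square roots of the
eigenvalues of `Aᴴ * A`. -/
noncomputable def singVals {p q : ℕ} (A : Matrix (Fin p) (Fin q) ℝ) : Fin q → ℝ :=
  fun i => Real.sqrt ((Matrix.isHermitian_conjTranspose_mul_self A).eigenvalues i)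

/-- The nuclear norm: the sum of the singular values. -/
noncomputable def nuclearNorm {p q : ℕ} (A : Matrix (Fin p) (Fin q) ℝ) : ℝ :=
  ∑ i, singVals A i

/-- The Frobenius norm. -/
noncomputable def frobNorm {p q : ℕ} (A : Matrix (Fin p) (Fin q) ℝ) : ℝ :=
  Real.sqrt (∑ j, ∑ k, (A j k) ^ 2)

/-- The `p × q` rectangular diagonal matrix with diagonal entries `a 0, a 1, …`. -/
def rectDiag (p q : ℕ) (a : ℕ → ℝ) : Matrix (Fin p) (Fin q) ℝ :=
  Matrix.of fun j k => if (j : ℕ) = (k : ℕ) then a (j : ℕ) else 0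

/-!
Put `G = A - B* = U Σ_G Vᵀ`, where `Σ_G` has diagonal entries `a k - (a k - λ)₊ ∈ [0, λ]`.
Then `|G x| ≤ λ |x|`, so evaluating `⟨G, B⟩ = tr (Gᵀ B)` in an orthonormal eigenbasis of `Bᵀ B`
and applying Cauchy–Schwarz column by column gives `⟨G, B⟩ ≤ λ ‖B‖_*` for every `B`.
For `B = B*` this is an equality: `Σ_G` equals `λ` wherever `Σ_λ` is nonzero, and in the
coordinates `Vᵀ x` an eigenvector `x` of `B*ᵀ B*` for the eigenvalue `μ` is supported where the
diagonal of `Σ_λ` equals `√μ`.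
So `λ G` is a subgradient of `λ ‖·‖_*` at `B*`, and the expansion
`‖B - A‖² = ‖B - B*‖² + ‖B* - A‖² + 2 ⟨G, B* - B⟩` finishes the proof.
-/

open Finset

namespace SoftThreshold

section FrobeniusInner

variable {m n : Type*} [Fintype m] [Fintype n]

def frobInner (X Y : Matrix m n ℝ) : ℝ := ∑ j, ∑ k, X j k * Y j k

lemma frobNorm_sq {p q : ℕ} (X : Matrix (Fin p) (Fin q) ℝ) :
    frobNorm X ^ 2 = frobInner X X := by
  rw [frobNorm, Real.sq_sqrt (by positivity)]
  simp only [frobInner, sq]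

lemma frobInner_self_nonneg (X : Matrix m n ℝ) : 0 ≤ frobInner X X :=
  sum_nonneg fun _ _ => sum_nonneg fun _ _ => mul_self_nonneg _

lemma frobInner_sub_self_eq (A B C : Matrix m n ℝ) :
    frobInner (B - A) (B - A) = frobInner (B - C) (B - C) + frobInner (C - A) (C - A) +
      2 * (frobInner (A - C) C - frobInner (A - C) B) := by
  simp only [frobInner, Matrix.sub_apply, mul_sum, ← sum_add_distrib, ← sum_sub_distrib]
  exact sum_congr rfl fun _ _ => sum_congr rfl fun _ _ => by ring

lemma frobInner_eq_sum_mulVec (b : OrthonormalBasis n ℝ (EuclideanSpace ℝ n))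
    (X Y : Matrix m n ℝ) : frobInner X Y = ∑ i, (X *ᵥ ⇑(b i)) ⬝ᵥ (Y *ᵥ ⇑(b i)) := by
  have parseval (j : m) : ∑ k, X j k * Y j k = ∑ i, (X *ᵥ ⇑(b i)) j * (Y *ᵥ ⇑(b i)) j := by
    simpa [PiLp.inner_apply, mulVec, dotProduct, mul_comm] using
      (b.sum_inner_mul_inner (WithLp.toLp 2 (X j)) (WithLp.toLp 2 (Y j))).symm
  simp only [frobInner, parseval, dotProduct]
  exact sum_comm

end FrobeniusInner

section DotProduct

variable {m n : Type*} [Fintype m] [Fintype n]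

lemma mulVec_dotProduct_mulVec (M N : Matrix m n ℝ) (x y : n → ℝ) :
    (M *ᵥ x) ⬝ᵥ (N *ᵥ y) = x ⬝ᵥ ((Mᵀ * N) *ᵥ y) := by
  rw [← mulVec_mulVec, dotProduct_mulVec x Mᵀ, vecMul_transpose]

lemma dotProduct_le_sqrt_mul_sqrt (x y : n → ℝ) : x ⬝ᵥ y ≤ √(x ⬝ᵥ x) * √(y ⬝ᵥ y) := by
  simpa only [dotProduct, sq] using Real.sum_mul_le_sqrt_mul_sqrt univ x y

lemma sum_sq_mulVec_of_transpose_mul_self [DecidableEq n] {W : Matrix m n ℝ} (hW : Wᵀ * W = 1)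
    (x : n → ℝ) : ∑ k, (W *ᵥ x) k ^ 2 = x ⬝ᵥ x := by
  simp only [sq]
  rw [← dotProduct, mulVec_dotProduct_mulVec, hW, one_mulVec]

lemma _root_.OrthonormalBasis.dotProduct_self (b : OrthonormalBasis n ℝ (EuclideanSpace ℝ n))
    (i : n) : ⇑(b i) ⬝ᵥ ⇑(b i) = 1 := by
  have h := EuclideanSpace.inner_eq_star_dotProduct (b i) (b i)
  rw [star_trivial, real_inner_self_eq_norm_sq, b.orthonormal.1 i, one_pow] at h
  exact h.symm

end DotProduct

lemma sum_mul_sq_eq_sqrt {ι : Type*} [Fintype ι] {c y : ι → ℝ} {μ : ℝ} (hc : ∀ k, 0 ≤ c k)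
    (hy : ∑ k, y k ^ 2 = 1) (h : ∀ k, c k ^ 2 * y k = μ * y k) :
    ∑ k, c k * y k ^ 2 = √μ := by
  have (k : ι) : c k * y k ^ 2 = √μ * y k ^ 2 := by
    rcases eq_or_ne (y k) 0 with hy0 | hy0
    · simp [hy0]
    · rw [← mul_right_cancel₀ hy0 (h k), Real.sqrt_sq (hc k)]
  rw [sum_congr rfl fun k _ => this k, ← mul_sum, hy, mul_one]

lemma singVals_eq_sqrt {p q : ℕ} (B : Matrix (Fin p) (Fin q) ℝ) (i : Fin q) :
    singVals B i = √((B *ᵥ ⇑((isHermitian_conjTranspose_mul_self B).eigenvectorBasis i)) ⬝ᵥ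
      (B *ᵥ ⇑((isHermitian_conjTranspose_mul_self B).eigenvectorBasis i))) := by
  rw [singVals, (isHermitian_conjTranspose_mul_self B).eigenvalues_eq, mulVec_dotProduct_mulVec]
  simp

lemma frobInner_le_mul_nuclearNorm {p q : ℕ} {G : Matrix (Fin p) (Fin q) ℝ} {lam : ℝ}
    (hlam : 0 ≤ lam) (hG : ∀ x, (G *ᵥ x) ⬝ᵥ (G *ᵥ x) ≤ lam ^ 2 * (x ⬝ᵥ x))
    (B : Matrix (Fin p) (Fin q) ℝ) : frobInner G B ≤ lam * nuclearNorm B := by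
  set b := (isHermitian_conjTranspose_mul_self B).eigenvectorBasis
  rw [frobInner_eq_sum_mulVec b, nuclearNorm, mul_sum]
  refine sum_le_sum fun i _ => ?_
  have hGb : √((G *ᵥ ⇑(b i)) ⬝ᵥ (G *ᵥ ⇑(b i))) ≤ lam := by
    calc √((G *ᵥ ⇑(b i)) ⬝ᵥ (G *ᵥ ⇑(b i))) ≤ √(lam ^ 2 * (⇑(b i) ⬝ᵥ ⇑(b i))) :=
          Real.sqrt_le_sqrt (hG _)
      _ = lam := by rw [b.dotProduct_self, mul_one, Real.sqrt_sq hlam]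
  calc (G *ᵥ ⇑(b i)) ⬝ᵥ (B *ᵥ ⇑(b i))
      ≤ √((G *ᵥ ⇑(b i)) ⬝ᵥ (G *ᵥ ⇑(b i))) * √((B *ᵥ ⇑(b i)) ⬝ᵥ (B *ᵥ ⇑(b i))) :=
        dotProduct_le_sqrt_mul_sqrt _ _
    _ ≤ lam * singVals B i := by
        rw [singVals_eq_sqrt]
        exact mul_le_mul_of_nonneg_right hGb (Real.sqrt_nonneg _)

def rectDiagEntry (p : ℕ) (f : ℕ → ℝ) (k : ℕ) : ℝ := if k < p then f k else 0

section RectDiag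

variable {p q : ℕ}

lemma rectDiag_sub (f g : ℕ → ℝ) : rectDiag p q f - rectDiag p q g = rectDiag p q (f - g) := by
  ext j k
  simp only [Matrix.sub_apply, rectDiag, of_apply, Pi.sub_apply]
  split_ifs <;> simp

lemma transpose_rectDiag_mul_rectDiag (f g : ℕ → ℝ) :
    (rectDiag p q f)ᵀ * rectDiag p q g =
      diagonal fun k : Fin q => rectDiagEntry p f k * rectDiagEntry p g k := by
  ext k l
  simp only [mul_apply, transpose_apply, rectDiag, of_apply, diagonal_apply, rectDiagEntry]
  by_cases hk : (k : ℕ) < p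
  · rw [sum_eq_single ⟨k, hk⟩ fun j _ hj => by simp [Fin.val_ne_of_ne hj]]
    · by_cases hkl : k = l
      · subst hkl; simp [hk]
      · simp [Fin.val_ne_of_ne hkl, hkl]
    · simp
  · have hz (j : Fin p) : (j : ℕ) ≠ k := fun hjk => hk (hjk ▸ j.isLt)
    simp [hz, hk]

variable {U : Matrix (Fin p) (Fin p) ℝ} {V : Matrix (Fin q) (Fin q) ℝ}

lemma transpose_svd_mul_svd (hU : Uᵀ * U = 1) (f g : ℕ → ℝ) :
    (U * rectDiag p q f * Vᵀ)ᵀ * (U * rectDiag p q g * Vᵀ) =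
      V * diagonal (fun k : Fin q => rectDiagEntry p f k * rectDiagEntry p g k) * Vᵀ := by
  rw [← transpose_rectDiag_mul_rectDiag]
  simp only [transpose_mul, transpose_transpose, Matrix.mul_assoc]
  rw [← Matrix.mul_assoc Uᵀ, hU, Matrix.one_mul]

lemma svd_mulVec_dotProduct_svd_mulVec (hU : Uᵀ * U = 1) (f g : ℕ → ℝ) (x : Fin q → ℝ) :
    ((U * rectDiag p q f * Vᵀ) *ᵥ x) ⬝ᵥ ((U * rectDiag p q g * Vᵀ) *ᵥ x) =
      ∑ k : Fin q, rectDiagEntry p f k * rectDiagEntry p g k * (Vᵀ *ᵥ x) k ^ 2 := by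
  rw [mulVec_dotProduct_mulVec, transpose_svd_mul_svd hU, ← mulVec_mulVec, ← mulVec_mulVec,
    dotProduct_mulVec, ← mulVec_transpose]
  simp only [dotProduct, mulVec_diagonal, sq]
  exact sum_congr rfl fun k _ => by ring

lemma svd_mulVec_dotProduct_self_le (hU : Uᵀ * U = 1) (hV : Vᵀ * V = 1) {d : ℕ → ℝ} {lam : ℝ}
    (hd : ∀ k < min p q, d k ^ 2 ≤ lam ^ 2) (x : Fin q → ℝ) :
    ((U * rectDiag p q d * Vᵀ) *ᵥ x) ⬝ᵥ ((U * rectDiag p q d * Vᵀ) *ᵥ x) ≤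
      lam ^ 2 * (x ⬝ᵥ x) := by
  rw [svd_mulVec_dotProduct_svd_mulVec hU,
    ← sum_sq_mulVec_of_transpose_mul_self (by rwa [transpose_transpose, mul_eq_one_comm]),
    mul_sum]
  refine sum_le_sum fun k _ => mul_le_mul_of_nonneg_right ?_ (sq_nonneg _)
  unfold rectDiagEntry
  split_ifs with hk
  · simpa [sq] using hd k (lt_min hk k.isLt)
  · simpa using sq_nonneg lam

lemma rectDiagEntry_sq_mul_eq_of_mulVec_eq_smul (hU : Uᵀ * U = 1) (hV : Vᵀ * V = 1)
    {c : ℕ → ℝ} {v : Fin q → ℝ} {μ : ℝ}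
    (h : ((U * rectDiag p q c * Vᵀ)ᵀ * (U * rectDiag p q c * Vᵀ)) *ᵥ v = μ • v) (k : Fin q) :
    rectDiagEntry p c k ^ 2 * (Vᵀ *ᵥ v) k = μ * (Vᵀ *ᵥ v) k := by
  rw [transpose_svd_mul_svd hU] at h
  replace h := congrArg (Vᵀ *ᵥ ·) h
  simp only [mulVec_mulVec, ← Matrix.mul_assoc, hV, Matrix.one_mul] at h
  rw [← mulVec_mulVec, mulVec_smul] at h
  simpa [mulVec_diagonal, sq, mul_assoc] using congrFun h k

lemma frobInner_svd_eq_mul_nuclearNorm (hU : Uᵀ * U = 1) (hV : Vᵀ * V = 1) {c d : ℕ → ℝ}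
    {lam : ℝ} (hc : ∀ k, 0 ≤ c k) (hdc : ∀ k, d k * c k = lam * c k) :
    frobInner (U * rectDiag p q d * Vᵀ) (U * rectDiag p q c * Vᵀ) =
      lam * nuclearNorm (U * rectDiag p q c * Vᵀ) := by
  set hB := isHermitian_conjTranspose_mul_self (U * rectDiag p q c * Vᵀ)
  rw [frobInner_eq_sum_mulVec hB.eigenvectorBasis, nuclearNorm, mul_sum]
  refine sum_congr rfl fun i _ => ?_
  set y := Vᵀ *ᵥ ⇑(hB.eigenvectorBasis i)
  have hy : ∑ k, y k ^ 2 = 1 := by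
    rw [sum_sq_mulVec_of_transpose_mul_self (by rwa [transpose_transpose, mul_eq_one_comm]),
      hB.eigenvectorBasis.dotProduct_self]
  have hentry (k : ℕ) :
      rectDiagEntry p d k * rectDiagEntry p c k = lam * rectDiagEntry p c k := by
    unfold rectDiagEntry; split_ifs <;> simp [hdc]
  have hc' (k : Fin q) : 0 ≤ rectDiagEntry p c k := by
    unfold rectDiagEntry; split_ifs <;> simp [hc]
  rw [svd_mulVec_dotProduct_svd_mulVec hU, singVals]
  simp only [hentry, mul_assoc, ← mul_sum]
  rw [sum_mul_sq_eq_sqrt hc' hy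
    (rectDiagEntry_sq_mul_eq_of_mulVec_eq_smul hU hV (hB.mulVec_eigenvectorBasis i))]

end RectDiag

lemma sub_softThreshold_mul (a lam : ℝ) :
    (a - max (a - lam) 0) * max (a - lam) 0 = lam * max (a - lam) 0 := by
  rcases le_total (a - lam) 0 with h | h
  · simp [max_eq_right h]
  · rw [max_eq_left h]; ring

lemma sq_sub_softThreshold_le {a lam : ℝ} (ha : 0 ≤ a) :
    (a - max (a - lam) 0) ^ 2 ≤ lam ^ 2 := by
  rcases le_total (a - lam) 0 with h | h
  · rw [max_eq_right h, sub_zero]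
    exact pow_le_pow_left₀ ha (by linarith) 2
  · rw [max_eq_left h, sub_sub_cancel]

end SoftThreshold

open SoftThreshold in
theorem stmt_6 (p q : ℕ) (A : Matrix (Fin p) (Fin q) ℝ)
    (U : Matrix (Fin p) (Fin p) ℝ) (V : Matrix (Fin q) (Fin q) ℝ)
    (hU : Uᵀ * U = 1) (hV : Vᵀ * V = 1)
    (a : ℕ → ℝ) (ha : ∀ i < min p q, 0 ≤ a i)
    (hA : A = U * rectDiag p q a * Vᵀ)
    (lam : ℝ) (hlam : 0 < lam)
    (Bstar : Matrix (Fin p) (Fin q) ℝ)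
    (hBstar : Bstar = U * rectDiag p q (fun i => max (a i - lam) 0) * Vᵀ) :
    ∀ B : Matrix (Fin p) (Fin q) ℝ,
      (1 / 2) * frobNorm (Bstar - A) ^ 2 + lam * nuclearNorm Bstar ≤
        (1 / 2) * frobNorm (B - A) ^ 2 + lam * nuclearNorm B := by
  intro B
  set c : ℕ → ℝ := fun i => max (a i - lam) 0
  have hG : A - Bstar = U * rectDiag p q (a - c) * Vᵀ := by
    rw [hA, hBstar, ← Matrix.sub_mul, ← Matrix.mul_sub, rectDiag_sub]
  have hGB : frobInner (A - Bstar) B ≤ lam * nuclearNorm B :=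
    frobInner_le_mul_nuclearNorm hlam.le (hG ▸ svd_mulVec_dotProduct_self_le hU hV
      fun k hk => sq_sub_softThreshold_le (ha k hk)) B
  have hGBstar : frobInner (A - Bstar) Bstar = lam * nuclearNorm Bstar := by
    rw [hG, hBstar]
    exact frobInner_svd_eq_mul_nuclearNorm hU hV (fun k => le_max_right _ _)
      fun k => sub_softThreshold_mul (a k) lam
  have hexpand := frobInner_sub_self_eq A B Bstar
  have hdist := frobInner_self_nonneg (B - Bstar)
  rw [frobNorm_sq, frobNorm_sq]
  linarith
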